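/- arXiv:2406.05638 — 6 statements merged into one kernel-verified Lean document; each statement's English description precedes it below -/
import Mathlib

section
/- Let l and u be real numbers with 0 < l < u. The set of extreme points of the polyhedron R = {(t, x) ∈ ℝ² : x ≤ ((u − l)/(log u − log l))·(t − log l) + l, t ≤ log u, l ≤ x} is exactly {(log l, l), (log u, l), (log u, u)}. -/
/-- A point that uniquely maximizes a linear functional over `S` is extreme. -/
lemma extreme_of_unique_max {S : Set (ℝ × ℝ)} {p : ℝ × ℝ} (c d : ℝ) (hp : p ∈ S)
    (hmax : ∀ q ∈ S, c * q.1 + d * q.2 ≤ c * p.1 + d * p.2)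
    (huniq : ∀ q ∈ S, c * q.1 + d * q.2 = c * p.1 + d * p.2 → q = p) :
    p ∈ S.extremePoints ℝ := by
  refine ⟨hp, fun x₁ hx₁ x₂ hx₂ hseg => ?_⟩
  obtain ⟨a, b, ha, hb, hab, habp⟩ := hseg
  have h1 := hmax x₁ hx₁
  have h2 := hmax x₂ hx₂
  have hb1 : b = 1 - a := by linarith
  have hco1 : p.1 = a * x₁.1 + b * x₂.1 := by rw [← habp]; rfl
  have hco2 : p.2 = a * x₁.2 + b * x₂.2 := by rw [← habp]; rfl
  have hlin : c * p.1 + d * p.2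
      = a * (c * x₁.1 + d * x₁.2) + b * (c * x₂.1 + d * x₂.2) := by
    rw [hco1, hco2, hb1]; ring
  rw [hb1] at hlin
  have hb' : (0:ℝ) < 1 - a := hb1 ▸ hb
  have e1 : c * x₁.1 + d * x₁.2 = c * p.1 + d * p.2 := by
    nlinarith [mul_le_mul_of_nonneg_left h1 ha.le, mul_le_mul_of_nonneg_left h2 hb'.le]
  have e2 : c * x₂.1 + d * x₂.2 = c * p.1 + d * p.2 := by
    nlinarith [mul_le_mul_of_nonneg_left h1 ha.le, mul_le_mul_of_nonneg_left h2 hb'.le]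
  exact huniq x₁ hx₁ e1

lemma mem3 {V : Type*} [AddCommGroup V] [Module ℝ V] (A B C : V) (a b c : ℝ)
    (ha : 0 ≤ a) (hb : 0 ≤ b) (hc : 0 ≤ c) (habc : a + b + c = 1) :
    a • A + b • B + c • C ∈ convexHull ℝ ({A, B, C} : Set V) := by
  have hconv : Convex ℝ (convexHull ℝ ({A, B, C} : Set V)) := convex_convexHull ℝ _
  have hA : A ∈ convexHull ℝ ({A, B, C} : Set V) := subset_convexHull ℝ _ (by simp)
  have hB : B ∈ convexHull ℝ ({A, B, C} : Set V) := subset_convexHull ℝ _ (by simp)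
  have hC : C ∈ convexHull ℝ ({A, B, C} : Set V) := subset_convexHull ℝ _ (by simp)
  rcases eq_or_lt_of_le (by linarith : (0:ℝ) ≤ b + c) with h | h
  · have hb0 : b = 0 := by linarith
    have hc0 : c = 0 := by linarith
    have ha1 : a = 1 := by linarith
    simpa [hb0, hc0, ha1] using hA
  · have hz : (b / (b + c)) • B + (c / (b + c)) • C ∈ convexHull ℝ ({A, B, C} : Set V) :=
      hconv hB hC (div_nonneg hb h.le) (div_nonneg hc h.le) (by field_simp)
    have hmem := hconv hA hz ha (by linarith : (0:ℝ) ≤ b + c) (by linarith)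
    have hrw : (b + c) • ((b / (b + c)) • B + (c / (b + c)) • C) = b • B + c • C := by
      rw [smul_add, smul_smul, smul_smul, mul_div_cancel₀ _ h.ne', mul_div_cancel₀ _ h.ne']
    rw [hrw] at hmem
    rwa [add_assoc]

theorem extremePoints_of_R (l u : ℝ) (hl : 0 < l) (hlu : l < u) :
    Set.extremePoints ℝ {q : ℝ × ℝ |
      q.2 ≤ (u - l) / (Real.log u - Real.log l) * (q.1 - Real.log l) + l ∧
      q.1 ≤ Real.log u ∧ l ≤ q.2} =
    {(Real.log l, l), (Real.log u, l), (Real.log u, u)} := by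
  set L := Real.log l with hLdef
  set U := Real.log u with hUdef
  have hLU : L < U := Real.log_lt_log hl hlu
  have hD : (0:ℝ) < U - L := by linarith
  have hE : (0:ℝ) < u - l := by linarith
  obtain ⟨m, hm⟩ : ∃ m : ℝ, m = (u - l) / (U - L) := ⟨_, rfl⟩
  have hm0 : 0 < m := hm ▸ div_pos hE hD
  have hmUL : m * (U - L) = u - l := by rw [hm]; exact div_mul_cancel₀ _ hD.ne'
  rw [show {q : ℝ × ℝ | q.2 ≤ (u - l) / (U - L) * (q.1 - L) + l ∧ q.1 ≤ U ∧ l ≤ q.2}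
      = {q : ℝ × ℝ | q.2 ≤ m * (q.1 - L) + l ∧ q.1 ≤ U ∧ l ≤ q.2} by rw [hm]]
  set R : Set (ℝ × ℝ) := {q : ℝ × ℝ | q.2 ≤ m * (q.1 - L) + l ∧ q.1 ≤ U ∧ l ≤ q.2} with hR
  have hAR : ((L, l) : ℝ × ℝ) ∈ R := ⟨by simp, hLU.le, le_refl _⟩
  have hBR : ((U, l) : ℝ × ℝ) ∈ R := ⟨by simp only; linarith, le_refl _, le_refl _⟩
  have hCR : ((U, u) : ℝ × ℝ) ∈ R := ⟨by simp only; linarith, le_refl _, hlu.le⟩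
  have hRhull : R = convexHull ℝ ({(L, l), (U, l), (U, u)} : Set (ℝ × ℝ)) := by
    apply Set.Subset.antisymm
    · rintro ⟨t, x⟩ ⟨h1, h2, h3⟩
      simp only at h1 h2 h3
      obtain ⟨a, hadef⟩ : ∃ a : ℝ, a = (U - t) / (U - L) := ⟨_, rfl⟩
      obtain ⟨c, hcdef⟩ : ∃ c : ℝ, c = (x - l) / (u - l) := ⟨_, rfl⟩
      have ha : 0 ≤ a := hadef ▸ div_nonneg (by linarith) hD.le
      have hc : 0 ≤ c := hcdef ▸ div_nonneg (by linarith) hE.le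
      have h6 : a * (U - L) = U - t := by rw [hadef]; exact div_mul_cancel₀ _ hD.ne'
      have h7 : c * (u - l) = x - l := by rw [hcdef]; exact div_mul_cancel₀ _ hE.ne'
      have hb : 0 ≤ 1 - a - c := by
        have h4 : c ≤ (t - L) / (U - L) := by
          rw [hcdef, div_le_div_iff₀ hE hD]
          nlinarith
        have h5 : a + (t - L) / (U - L) = 1 := by
          rw [hadef]; field_simp; ring
        linarith
      have key : ((t, x) : ℝ × ℝ) = a • ((L, l) : ℝ × ℝ) + (1 - a - c) • ((U, l) : ℝ × ℝ)
          + c • ((U, u) : ℝ × ℝ) := by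
        have : (a • ((L, l) : ℝ × ℝ) + (1 - a - c) • ((U, l) : ℝ × ℝ)
            + c • ((U, u) : ℝ × ℝ)) = (a * L + (1 - a - c) * U + c * U,
              a * l + (1 - a - c) * l + c * u) := by
          simp [Prod.smul_def, Prod.mk_add_mk]
        rw [this, Prod.mk.injEq]
        constructor <;> nlinarith
      rw [key]
      exact mem3 _ _ _ _ _ _ ha hb hc (by ring)
    · apply convexHull_min
      · rintro q (h | h | h) <;> subst h
        · exact hAR
        · exact hBR
        · exact hCR
      · rintro ⟨t1, x1⟩ ⟨h11, h12, h13⟩ ⟨t2, x2⟩ ⟨h21, h22, h23⟩ a b ha hb hab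
        simp only at h11 h12 h13 h21 h22 h23
        have hb1 : b = 1 - a := by linarith
        subst hb1
        refine ⟨?_, ?_, ?_⟩ <;>
          simp only [Prod.smul_def, Prod.mk_add_mk, smul_eq_mul, Prod.fst_add,
            Prod.snd_add, Prod.smul_fst, Prod.smul_snd]
        · nlinarith [mul_le_mul_of_nonneg_left h11 ha, mul_le_mul_of_nonneg_left h21 hb]
        · nlinarith [mul_le_mul_of_nonneg_left h12 ha, mul_le_mul_of_nonneg_left h22 hb]
        · nlinarith [mul_le_mul_of_nonneg_left h13 ha, mul_le_mul_of_nonneg_left h23 hb]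
  apply Set.Subset.antisymm
  · rw [hRhull]
    exact extremePoints_convexHull_subset
  · rintro q (h | h | h) <;> subst h
    · -- (L, l): unique maximizer of -t
      apply extreme_of_unique_max (-1) 0 hAR
      · rintro ⟨t, x⟩ ⟨h1, h2, h3⟩
        simp only at h1 h2 h3 ⊢
        nlinarith [mul_pos hm0 hD]
      · rintro ⟨t, x⟩ ⟨h1, h2, h3⟩ heq
        simp only at h1 h2 h3 heq
        have ht : t = L := by linarith
        have h0 : m * (t - L) = 0 := by rw [ht]; ring
        have hx : x = l := by linarith
        rw [Prod.mk.injEq]; exact ⟨ht, hx⟩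
    · -- (U, l): unique maximizer of t - x
      apply extreme_of_unique_max 1 (-1) hBR
      · rintro ⟨t, x⟩ ⟨h1, h2, h3⟩
        simp only at h1 h2 h3 ⊢
        linarith
      · rintro ⟨t, x⟩ ⟨h1, h2, h3⟩ heq
        simp only at h1 h2 h3 heq
        have ht : t = U := by linarith
        have hx : x = l := by linarith
        rw [Prod.mk.injEq]; exact ⟨ht, hx⟩
    · -- (U, u): unique maximizer of x
      apply extreme_of_unique_max 0 1 hCR
      · rintro ⟨t, x⟩ ⟨h1, h2, h3⟩
        simp only at h1 h2 h3 ⊢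
        have hle : m * (t - L) ≤ m * (U - L) :=
          mul_le_mul_of_nonneg_left (by linarith) hm0.le
        linarith
      · rintro ⟨t, x⟩ ⟨h1, h2, h3⟩ heq
        simp only at h1 h2 h3 heq
        have hx : x = u := by linarith
        have ht : t = U := by
          by_contra hne
          have htU : t < U := lt_of_le_of_ne h2 hne
          have : m * (t - L) < m * (U - L) := by
            exact mul_lt_mul_of_pos_left (by linarith) hm0
          linarith
        rw [Prod.mk.injEq]; exact ⟨ht, hx⟩
end

section
/- Let l and u be real numbers with 0 < l < u. The polyhedron R = {(t, x) ∈ ℝ² : x ≤ ((u − l)/(log u − log l))·(t − log l) + l, t ≤ log u, l ≤ x} is contained in the convex hull of the set S = {(t, x) ∈ ℝ² : x ≤ e^t, log l ≤ t ≤ log u, l ≤ x ≤ u}. -/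
theorem R_subset_convexHull_S (l u : ℝ) (hl : 0 < l) (hlu : l < u) :
    {q : ℝ × ℝ | q.2 ≤ (u - l) / (Real.log u - Real.log l) * (q.1 - Real.log l) + l ∧
      q.1 ≤ Real.log u ∧ l ≤ q.2} ⊆
    convexHull ℝ {q : ℝ × ℝ | q.2 ≤ Real.exp q.1 ∧ Real.log l ≤ q.1 ∧
      q.1 ≤ Real.log u ∧ l ≤ q.2 ∧ q.2 ≤ u} := by
  intro q hq
  obtain ⟨h1, h2, h3⟩ := hq
  set t := q.1 with ht
  set x := q.2 with hx
  have hu : (0:ℝ) < u := hl.trans hlu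
  have hLlt : Real.log l < Real.log u := Real.log_lt_log hl hlu
  have hL' : 0 < Real.log u - Real.log l := by linarith
  have hul : 0 < u - l := by linarith
  have htl : Real.log l ≤ t := by
    by_contra h
    push_neg at h
    have : (u - l) / (Real.log u - Real.log l) * (t - Real.log l) < 0 :=
      mul_neg_of_pos_of_neg (div_pos hul hL') (by linarith)
    linarith
  rcases eq_or_lt_of_le htl with heq | hlt
  · -- t = log l forces x = l, so q ∈ S
    have hx0 : x = l := by
      have h0 : (u - l) / (Real.log u - Real.log l) * (t - Real.log l) = 0 := by
        rw [← heq]; ring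
      linarith
    apply subset_convexHull
    refine ⟨?_, heq.le, h2, h3, ?_⟩
    · have : Real.exp t = l := by rw [← heq, Real.exp_log hl]
      linarith
    · linarith
  · -- log l < t : interpolate between A = (log l, l) and D = (log u, d)
    set s : ℝ := (t - Real.log l) / (Real.log u - Real.log l) with hs
    have hs0 : 0 < s := div_pos (by linarith) hL'
    have hs1 : s ≤ 1 := by rw [hs, div_le_one hL']; linarith
    set d : ℝ := l + (x - l) / s with hd
    have hdl : l ≤ d := by
      have : 0 ≤ (x - l) / s := div_nonneg (by linarith) hs0.le
      rw [hd]; linarith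
    have hsL : s * (Real.log u - Real.log l) = t - Real.log l :=
      div_mul_cancel₀ _ hL'.ne'
    have hdu : d ≤ u := by
      have key : x - l ≤ s * (u - l) := by
        have heq2 : (u - l) / (Real.log u - Real.log l) * (t - Real.log l)
            = s * (u - l) := by
          rw [hs]; field_simp
        linarith [h1, heq2]
      have : (x - l) / s ≤ u - l := (div_le_iff₀ hs0).2 (by nlinarith)
      rw [hd]; linarith
    have hA : ((Real.log l, l) : ℝ × ℝ) ∈ {q : ℝ × ℝ | q.2 ≤ Real.exp q.1 ∧
        Real.log l ≤ q.1 ∧ q.1 ≤ Real.log u ∧ l ≤ q.2 ∧ q.2 ≤ u} := by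
      refine ⟨?_, le_refl _, hLlt.le, le_refl _, hlu.le⟩
      simp [Real.exp_log hl]
    have hD : ((Real.log u, d) : ℝ × ℝ) ∈ {q : ℝ × ℝ | q.2 ≤ Real.exp q.1 ∧
        Real.log l ≤ q.1 ∧ q.1 ≤ Real.log u ∧ l ≤ q.2 ∧ q.2 ≤ u} := by
      refine ⟨?_, hLlt.le, le_refl _, hdl, hdu⟩
      simp only [Real.exp_log hu]
      exact hdu
    have hseg : q ∈ segment ℝ ((Real.log l, l) : ℝ × ℝ) (Real.log u, d) := by
      refine ⟨1 - s, s, by linarith, hs0.le, by ring, ?_⟩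
      have hq1 : (1 - s) * Real.log l + s * Real.log u = t := by nlinarith [hsL]
      have hsx : s * ((x - l) / s) = x - l := mul_div_cancel₀ _ hs0.ne'
      have hq2 : (1 - s) * l + s * d = x := by rw [hd]; nlinarith [hsx]
      have : ((1 - s) • ((Real.log l, l) : ℝ × ℝ) + s • ((Real.log u, d) : ℝ × ℝ))
          = (t, x) := by
        simp only [Prod.smul_mk, Prod.mk_add_mk, smul_eq_mul, Prod.mk.injEq]
        exact ⟨hq1, hq2⟩
      rw [this, ht, hx]
    exact segment_subset_convexHull hA hD hseg
end

section
/- Let l and u be real numbers with 0 < l < u. The convex hull of the set S = {(t, x) ∈ ℝ² : x ≤ e^t, log l ≤ t ≤ log u, l ≤ x ≤ u} equals the polyhedron R = {(t, x) ∈ ℝ² : x ≤ ((u − l)/(log u − log l))·(t − log l) + l, t ≤ log u, l ≤ x}. (Proposition 3.2: R = conv(S).) -/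
lemma convex_R_aux (a b l m : ℝ) :
    Convex ℝ {q : ℝ × ℝ | q.2 ≤ m * (q.1 - a) + l ∧ q.1 ≤ b ∧ l ≤ q.2} := by
  rintro p ⟨hp1, hp2, hp3⟩ q ⟨hq1, hq2, hq3⟩ s t hs ht hst
  have ht1 : t = 1 - s := by linarith
  subst ht1
  refine ⟨?_, ?_, ?_⟩
  · simp only [Prod.smul_fst, Prod.smul_snd, Prod.fst_add, Prod.snd_add, smul_eq_mul,
      Set.mem_setOf_eq]
    nlinarith [mul_le_mul_of_nonneg_left hp1 hs, mul_le_mul_of_nonneg_left hq1 ht]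
  · simp only [Prod.smul_fst, Prod.fst_add, smul_eq_mul]
    nlinarith [mul_le_mul_of_nonneg_left hp2 hs, mul_le_mul_of_nonneg_left hq2 ht]
  · simp only [Prod.smul_snd, Prod.snd_add, smul_eq_mul]
    nlinarith [mul_le_mul_of_nonneg_left hp3 hs, mul_le_mul_of_nonneg_left hq3 ht]


theorem convexHull_S_eq_R (l u : ℝ) (hl : 0 < l) (hlu : l < u) :
    convexHull ℝ {q : ℝ × ℝ | q.2 ≤ Real.exp q.1 ∧ Real.log l ≤ q.1 ∧
      q.1 ≤ Real.log u ∧ l ≤ q.2 ∧ q.2 ≤ u} =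
    {q : ℝ × ℝ | q.2 ≤ (u - l) / (Real.log u - Real.log l) * (q.1 - Real.log l) + l ∧
      q.1 ≤ Real.log u ∧ l ≤ q.2} := by
  set a := Real.log l with ha
  set b := Real.log u with hb
  have hu : 0 < u := lt_trans hl hlu
  have hab : a < b := Real.log_lt_log hl hlu
  have hba : 0 < b - a := by linarith
  have hul : 0 < u - l := by linarith
  have hexpa : Real.exp a = l := Real.exp_log hl
  have hexpb : Real.exp b = u := Real.exp_log hu
  set m := (u - l) / (b - a) with hm
  have hm0 : 0 < m := div_pos hul hba
  set S : Set (ℝ × ℝ) := {q : ℝ × ℝ | q.2 ≤ Real.exp q.1 ∧ a ≤ q.1 ∧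
      q.1 ≤ b ∧ l ≤ q.2 ∧ q.2 ≤ u} with hS
  set R : Set (ℝ × ℝ) := {q : ℝ × ℝ | q.2 ≤ m * (q.1 - a) + l ∧ q.1 ≤ b ∧ l ≤ q.2} with hR
  have hRconv : Convex ℝ R := convex_R_aux a b l m
  have hSR : S ⊆ R := by
    rintro ⟨t, x⟩ ⟨h1, h2, h3, h4, h5⟩
    refine ⟨?_, h3, h4⟩
    -- x ≤ exp t ≤ chord
    have hs0 : 0 ≤ (t - a) / (b - a) := div_nonneg (by linarith) hba.le
    have hs1 : (t - a) / (b - a) ≤ 1 := (div_le_one hba).mpr (by linarith)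
    have hcomb : (1 - (t - a) / (b - a)) • a + ((t - a) / (b - a)) • b = t := by
      simp only [smul_eq_mul]
      field_simp
      ring
    have := convexOn_exp.2 (Set.mem_univ a) (Set.mem_univ b)
      (by linarith : (0:ℝ) ≤ 1 - (t - a) / (b - a)) hs0 (by ring)
    rw [hcomb, hexpa, hexpb] at this
    simp only [smul_eq_mul] at this
    have hline : (1 - (t - a) / (b - a)) * l + (t - a) / (b - a) * u = m * (t - a) + l := by
      rw [hm]
      field_simp [hba.ne']
      ring
    calc x ≤ Real.exp t := h1
      _ ≤ (1 - (t - a) / (b - a)) * l + (t - a) / (b - a) * u := this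
      _ = m * (t - a) + l := hline
  apply Set.Subset.antisymm
  · exact convexHull_min hSR hRconv
  · rintro ⟨t, x⟩ ⟨h1, h2, h3⟩
    have hta : a ≤ t := by
      by_contra h
      push_neg at h
      nlinarith [mul_pos hm0 (by linarith : (0:ℝ) < a - t)]
    rcases eq_or_lt_of_le hta with heq | hlt
    · -- t = a, so x = l, point is (a, l) ∈ S
      have hx : x = l := le_antisymm (by nlinarith) h3
      apply subset_convexHull ℝ S
      refine ⟨?_, ?_, ?_, ?_, ?_⟩ <;> simp [← heq, hx, hexpa] <;> linarith
    · -- t > a: write (t,x) = (1-s)•(a,l) + s•(b,y)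
      set s := (t - a) / (b - a) with hsdef
      have hs0 : 0 < s := div_pos (by linarith) hba
      have hs1 : s ≤ 1 := (div_le_one hba).mpr (by linarith)
      set y := (x - (1 - s) * l) / s with hy
      have hsy : s * y = x - (1 - s) * l := by
        rw [hy]; field_simp
      have hyl : l ≤ y := by
        rw [hy, le_div_iff₀ hs0]
        nlinarith
      have hyu : y ≤ u := by
        rw [hy, div_le_iff₀ hs0]
        have hst : s * (b - a) = t - a := by rw [hsdef]; field_simp
        have hml : m * (t - a) = s * (u - l) := by
          rw [← hst, hm]; field_simp
        nlinarith
      have hA : ((a, l) : ℝ × ℝ) ∈ S := by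
        refine ⟨?_, le_refl _, hab.le, le_refl _, hlu.le⟩
        simp [hexpa]
      have hP : ((b, y) : ℝ × ℝ) ∈ S := by
        refine ⟨?_, hab.le, le_refl _, hyl, hyu⟩
        simp [hexpb, hyu]
      have hmem := (convex_convexHull ℝ S) (subset_convexHull ℝ S hA)
        (subset_convexHull ℝ S hP) (by linarith : (0:ℝ) ≤ 1 - s) hs0.le (by ring)
      have heq2 : (1 - s) • ((a, l) : ℝ × ℝ) + s • ((b, y) : ℝ × ℝ) = (t, x) := by
        have h1' : (1 - s) * a + s * b = t := by
          rw [hsdef]; field_simp; ring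
        have h2' : (1 - s) * l + s * y = x := by
          rw [hsy]; ring
        simp [Prod.ext_iff, Prod.smul_fst, Prod.smul_snd, smul_eq_mul, h1', h2']
      rwa [heq2] at hmem
end

section
/- Let γ̲ and γ̄ be real numbers with 0 < γ̲ < γ̄. The convex hull of the set S^γ = {(g̃, g) ∈ ℝ² : g ≤ e^{g̃}, γ̲ ≤ g ≤ γ̄, log γ̲ ≤ g̃ ≤ log γ̄} equals the polyhedron R^γ = {(g̃, g) ∈ ℝ² : g ≤ ((γ̄ − γ̲)/(log γ̄ − log γ̲))·(g̃ − log γ̲) + γ̲, g̃ ≤ log γ̄, γ̲ ≤ g}. (Proposition 3.3.) -/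
theorem convexHull_S_gamma_eq_R_gamma (γl γu : ℝ) (hγl : 0 < γl) (hγlu : γl < γu) :
    convexHull ℝ {q : ℝ × ℝ | q.2 ≤ Real.exp q.1 ∧ γl ≤ q.2 ∧ q.2 ≤ γu ∧
      Real.log γl ≤ q.1 ∧ q.1 ≤ Real.log γu} =
    {q : ℝ × ℝ | q.2 ≤ (γu - γl) / (Real.log γu - Real.log γl) * (q.1 - Real.log γl) + γl ∧
      q.1 ≤ Real.log γu ∧ γl ≤ q.2} := by
  have hγu : 0 < γu := hγl.trans hγlu
  have hlL : Real.log γl < Real.log γu := Real.log_lt_log hγl hγlu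
  set l := Real.log γl with hl
  set L := Real.log γu with hL
  have hd : 0 < L - l := by linarith
  have hD : 0 < γu - γl := by linarith
  have hel : Real.exp l = γl := Real.exp_log hγl
  have heL : Real.exp L = γu := Real.exp_log hγu
  apply Set.Subset.antisymm
  · apply convexHull_min
    · rintro ⟨x, y⟩ ⟨h1, h2, h3, h4, h5⟩
      refine ⟨?_, h5, h2⟩
      have ha : (0:ℝ) ≤ (L - x) / (L - l) := div_nonneg (by linarith) hd.le
      have hb : (0:ℝ) ≤ (x - l) / (L - l) := div_nonneg (by linarith) hd.le
      have hab : (L - x) / (L - l) + (x - l) / (L - l) = 1 := by field_simp; ring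
      have hkey := convexOn_exp.2 (Set.mem_univ l) (Set.mem_univ L) ha hb hab
      simp only [smul_eq_mul] at hkey
      have hx : (L - x) / (L - l) * l + (x - l) / (L - l) * L = x := by
        field_simp; ring
      rw [hx, hel, heL] at hkey
      have heq : (L - x) / (L - l) * γl + (x - l) / (L - l) * γu
          = (γu - γl) / (L - l) * (x - l) + γl := by
        field_simp; ring
      dsimp only
      linarith [heq ▸ hkey]
    · rintro ⟨x1, y1⟩ ⟨p1, p2, p3⟩ ⟨x2, y2⟩ ⟨q1, q2, q3⟩ a b ha hb hab
      simp only [Set.mem_setOf_eq, Prod.smul_mk, Prod.mk_add_mk, smul_eq_mul] at *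
      obtain rfl : b = 1 - a := by linarith
      refine ⟨?_, ?_, ?_⟩
      · nlinarith [mul_le_mul_of_nonneg_left p1 ha, mul_le_mul_of_nonneg_left q1 hb]
      · nlinarith [mul_le_mul_of_nonneg_left p2 ha, mul_le_mul_of_nonneg_left q2 hb]
      · nlinarith [mul_le_mul_of_nonneg_left p3 ha, mul_le_mul_of_nonneg_left q3 hb]
  · rintro ⟨x, y⟩ ⟨h1, h2, h3⟩
    dsimp only at h1 h2 h3
    set S : Set (ℝ × ℝ) := {q : ℝ × ℝ | q.2 ≤ Real.exp q.1 ∧ γl ≤ q.2 ∧ q.2 ≤ γu ∧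
      l ≤ q.1 ∧ q.1 ≤ L} with hS
    have hA : ((l, γl) : ℝ × ℝ) ∈ S := ⟨by rw [hel], le_refl _, hγlu.le, le_refl _, hlL.le⟩
    have hB : ((L, γu) : ℝ × ℝ) ∈ S := ⟨by rw [heL], hγlu.le, le_refl _, hlL.le, le_refl _⟩
    have hC : ((L, γl) : ℝ × ℝ) ∈ S :=
      ⟨by rw [heL]; exact hγlu.le, le_refl _, hγlu.le, hlL.le, le_refl _⟩
    set a : ℝ := (L - x) / (L - l) with hadef
    set b : ℝ := (y - γl) / (γu - γl) with hbdef
    set c : ℝ := 1 - a - b with hcdef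
    have ha0 : 0 ≤ a := div_nonneg (by linarith) hd.le
    have hb0 : 0 ≤ b := div_nonneg (by linarith) hD.le
    have hc0 : 0 ≤ c := by
      have h1' : (y - γl) / (γu - γl) ≤ (x - l) / (L - l) := by
        rw [div_le_div_iff₀ hD hd]
        have e1 : (γu - γl) / (L - l) * (x - l) * (L - l) = (x - l) * (γu - γl) := by
          field_simp
        nlinarith [mul_le_mul_of_nonneg_right h1 hd.le, e1]
      have hab1 : (L - x) / (L - l) + (x - l) / (L - l) = 1 := by field_simp; ring
      rw [hcdef, hadef, hbdef]
      linarith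
    have hsum : a + b + c = 1 := by rw [hcdef]; ring
    have key := (convex_convexHull ℝ S).sum_mem (t := (Finset.univ : Finset (Fin 3)))
      (w := ![a, b, c]) (z := ![(l, γl), (L, γu), (L, γl)])
      (fun i _ => by fin_cases i <;> simpa using by assumption)
      (by simp [Fin.sum_univ_three]; linarith)
      (fun i _ => by
        fin_cases i
        · exact subset_convexHull ℝ S hA
        · exact subset_convexHull ℝ S hB
        · exact subset_convexHull ℝ S hC)
    have heq : (∑ i : Fin 3, ![a, b, c] i • ![((l:ℝ), γl), (L, γu), (L, γl)] i) = (x, y) := by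
      simp [Fin.sum_univ_three, Prod.ext_iff, Prod.smul_mk, smul_eq_mul]
      constructor
      · have : a * (L - l) = L - x := by rw [hadef]; field_simp
        rw [hcdef]; nlinarith
      · have : b * (γu - γl) = y - γl := by rw [hbdef]; field_simp
        rw [hcdef]; nlinarith
    rw [heq] at key
    exact key
end

section
/- The closure in ℝ³ of the set K₁ = {(x₁, x₂, x₃) ∈ ℝ³ : x₂ > 0 and x₂·e^{x₃/x₂} ≤ x₁} equals K₁ ∪ K₂, where K₂ = {(x₁, x₂, x₃) ∈ ℝ³ : x₂ = 0, x₁ ≥ 0, x₃ ≤ 0}. In other words, the exponential cone K_exp, defined as the closure of {(x₁, x₂, x₃) ∈ ℝ³ : x₂·e^{x₃/x₂} ≤ x₁, x₂ > 0}, can be expressed as the union K₁ ∪ K₂. -/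
open Filter Real Topology

private lemma sq_div_four_le_exp {t : ℝ} (ht : 0 ≤ t) : t ^ 2 / 4 ≤ Real.exp t := by
  have h1 : t / 2 + 1 ≤ Real.exp (t / 2) := Real.add_one_le_exp _
  have h2 : Real.exp t = Real.exp (t / 2) * Real.exp (t / 2) := by
    rw [← Real.exp_add]; ring_nf
  nlinarith [Real.exp_pos (t / 2)]

theorem exp_cone_closure :
    closure {p : ℝ × ℝ × ℝ | 0 < p.2.1 ∧ p.2.1 * Real.exp (p.2.2 / p.2.1) ≤ p.1} =
    {p : ℝ × ℝ × ℝ | 0 < p.2.1 ∧ p.2.1 * Real.exp (p.2.2 / p.2.1) ≤ p.1} ∪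
    {p : ℝ × ℝ × ℝ | p.2.1 = 0 ∧ 0 ≤ p.1 ∧ p.2.2 ≤ 0} := by
  apply Set.Subset.antisymm
  · rintro ⟨a, b, c⟩ hp
    obtain ⟨u, hu, hlim⟩ := mem_closure_iff_seq_limit.mp hp
    have h1 : Tendsto (fun n => (u n).1) atTop (𝓝 a) :=
      (continuous_fst.tendsto _).comp hlim
    have h2 : Tendsto (fun n => (u n).2.1) atTop (𝓝 b) :=
      ((continuous_fst.comp continuous_snd).tendsto _).comp hlim
    have h3 : Tendsto (fun n => (u n).2.2) atTop (𝓝 c) :=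
      ((continuous_snd.comp continuous_snd).tendsto _).comp hlim
    have hb0 : 0 ≤ b := ge_of_tendsto' h2 fun n => (hu n).1.le
    have ha0 : 0 ≤ a := ge_of_tendsto' h1 fun n =>
      le_trans (mul_nonneg (hu n).1.le (Real.exp_pos _).le) (hu n).2
    rcases eq_or_lt_of_le hb0 with hb | hb
    · right
      refine ⟨hb.symm, ha0, ?_⟩
      by_contra hc
      push_neg at hc
      have ec : ∀ᶠ n in atTop, c / 2 < (u n).2.2 :=
        h3.eventually (eventually_gt_nhds (by linarith))
      have ea : ∀ᶠ n in atTop, (u n).1 < a + 1 :=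
        h1.eventually (eventually_lt_nhds (by linarith))
      have eb : ∀ᶠ n in atTop, (u n).2.1 < c ^ 2 / (16 * (a + 1)) := by
        refine h2.eventually (eventually_lt_nhds ?_)
        rw [← hb]
        positivity
      obtain ⟨n, ⟨hcn, han⟩, hbn⟩ := ((ec.and ea).and eb).exists
      have hbpos : 0 < (u n).2.1 := (hu n).1
      set bn := (u n).2.1
      set cn := (u n).2.2
      have hcpos : 0 < cn := lt_of_le_of_lt (by linarith) hcn
      have ht : 0 ≤ cn / bn := div_nonneg hcpos.le hbpos.le
      have hexp : (cn / bn) ^ 2 / 4 ≤ Real.exp (cn / bn) := sq_div_four_le_exp ht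
      have key : cn ^ 2 / (4 * bn) ≤ (u n).1 := by
        refine le_trans ?_ (hu n).2
        have : cn ^ 2 / (4 * bn) = bn * ((cn / bn) ^ 2 / 4) := by
          field_simp
        rw [this]
        exact mul_le_mul_of_nonneg_left hexp hbpos.le
      have h4 : cn ^ 2 ≤ (4 * bn) * (a + 1) := by
        have := (div_le_iff₀ (by positivity)).mp key
        nlinarith
      have hcpos' : 0 < c := lt_of_le_of_lt (le_refl 0) (by simpa using hc)
      have h5 : c ^ 2 / 4 < cn ^ 2 := by nlinarith
      have h6 : bn * (16 * (a + 1)) < c ^ 2 :=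
        (lt_div_iff₀ (by positivity)).mp hbn
      linarith
    · left
      have hf : Tendsto (fun n => (u n).2.1 * Real.exp ((u n).2.2 / (u n).2.1))
          atTop (𝓝 (b * Real.exp (c / b))) :=
        h2.mul ((Real.continuous_exp.tendsto _).comp (h3.div h2 hb.ne'))
      exact ⟨hb, le_of_tendsto_of_tendsto' hf h1 fun n => (hu n).2⟩
  · rintro ⟨a, b, c⟩ (hp | ⟨hb, ha, hc⟩)
    · exact subset_closure hp
    · subst hb
      apply mem_closure_iff_seq_limit.mpr
      refine ⟨fun n => (a + 1 / (n + 1), (1 / (n + 1), c)), fun n => ?_, ?_⟩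
      · have hpos : (0:ℝ) < 1 / (n + 1) := by positivity
        refine ⟨hpos, ?_⟩
        have hle : Real.exp (c / (1 / (n + 1))) ≤ 1 := by
          rw [Real.exp_le_one_iff]
          exact div_nonpos_of_nonpos_of_nonneg hc hpos.le
        calc (1 : ℝ) / (n + 1) * Real.exp (c / (1 / (n + 1)))
            ≤ 1 / (n + 1) * 1 := mul_le_mul_of_nonneg_left hle hpos.le
          _ = 1 / (n + 1) := mul_one _
          _ ≤ a + 1 / (n + 1) := by linarith
      · have h0 : Tendsto (fun n : ℕ => (1 : ℝ) / (n + 1)) atTop (𝓝 0) :=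
          tendsto_one_div_add_atTop_nhds_zero_nat
        have ha' : Tendsto (fun n : ℕ => a + 1 / (n + 1)) atTop (𝓝 a) := by
          simpa using (tendsto_const_nhds.add h0)
        exact ha'.prodMk_nhds (h0.prodMk_nhds tendsto_const_nhds)
end

section
/- Let ι, P, M be finite index sets, let x : ι → ℝ with x_i > 0 for all i, let c : P → ℝ and c' : M → ℝ with c_j > 0 and c'_j > 0, and let a : ι × (P ⊕ M) → ℝ be exponents. Then the signomial inequality ∑_{j ∈ P} c_j·∏_{i ∈ ι} x_i^{a_{ij}} ≤ ∑_{j ∈ M} c'_j·∏_{i ∈ ι} x_i^{a_{ij}} holds if and only if there exist λ : P → ℝ and γ : M → ℝ with γ_j > 0 such that exp(∑_{i ∈ ι} a_{ij}·log x_i) ≤ λ_j for all j ∈ P, log γ_j ≤ ∑_{i ∈ ι} a_{ij}·log x_i for all j ∈ M, and ∑_{j ∈ P} c_j·λ_j ≤ ∑_{j ∈ M} c'_j·γ_j. -/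
open Finset

/- Each product of powers is `exp` of a linear form in `log x`, so the signomial inequality reads
`∑ c j * exp (u j) ≤ ∑ c' j * exp (v j)`. With nonnegative weights, an inequality between weighted
sums is equivalent to the same inequality between any upper bounds `lam ≥ exp u` on the left and
positive lower bounds `γ ≤ exp v` on the right (take the bounds tight for the forward direction),
and for `γ > 0` the bound `γ ≤ exp (v j)` is `log γ ≤ v j`. -/

theorem Real.prod_rpow_eq_exp_sum_mul_log {ι : Type*} (s : Finset ι) {x : ι → ℝ}
    (hx : ∀ i ∈ s, 0 < x i) (a : ι → ℝ) :
    ∏ i ∈ s, x i ^ a i = Real.exp (∑ i ∈ s, a i * Real.log (x i)) := by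
  rw [Real.exp_sum]
  refine prod_congr rfl fun i hi => ?_
  rw [Real.rpow_def_of_pos (hx i hi), mul_comm]

theorem sum_mul_le_sum_mul_iff_exists_bounds {P M : Type*} [Fintype P] [Fintype M]
    {c : P → ℝ} (hc : ∀ j, 0 ≤ c j) {c' : M → ℝ} (hc' : ∀ j, 0 ≤ c' j)
    (f : P → ℝ) {g : M → ℝ} (hg : ∀ j, 0 < g j) :
    ∑ j, c j * f j ≤ ∑ j, c' j * g j ↔
      ∃ (lam : P → ℝ) (γ : M → ℝ), (∀ j, 0 < γ j) ∧ (∀ j, f j ≤ lam j) ∧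
        (∀ j, γ j ≤ g j) ∧ ∑ j, c j * lam j ≤ ∑ j, c' j * γ j := by
  constructor
  · exact fun h => ⟨f, g, hg, fun _ => le_rfl, fun _ => le_rfl, h⟩
  · rintro ⟨lam, γ, -, hf, hγ, hsum⟩
    calc ∑ j, c j * f j
        ≤ ∑ j, c j * lam j := sum_le_sum fun j _ => mul_le_mul_of_nonneg_left (hf j) (hc j)
      _ ≤ ∑ j, c' j * γ j := hsum
      _ ≤ ∑ j, c' j * g j := sum_le_sum fun j _ => mul_le_mul_of_nonneg_left (hγ j) (hc' j)

theorem signomial_constraint_exact_reformulation {ι P M : Type*}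
    [Fintype ι] [Fintype P] [Fintype M]
    (x : ι → ℝ) (hx : ∀ i, 0 < x i)
    (c : P → ℝ) (hc : ∀ j, 0 < c j) (c' : M → ℝ) (hc' : ∀ j, 0 < c' j)
    (a : ι → P ⊕ M → ℝ) :
    (∑ j, c j * ∏ i, x i ^ a i (Sum.inl j) ≤ ∑ j, c' j * ∏ i, x i ^ a i (Sum.inr j)) ↔
    ∃ (lam : P → ℝ) (γ : M → ℝ), (∀ j, 0 < γ j) ∧
      (∀ j, Real.exp (∑ i, a i (Sum.inl j) * Real.log (x i)) ≤ lam j) ∧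
      (∀ j, Real.log (γ j) ≤ ∑ i, a i (Sum.inr j) * Real.log (x i)) ∧
      ∑ j, c j * lam j ≤ ∑ j, c' j * γ j := by
  simp only [Real.prod_rpow_eq_exp_sum_mul_log _ fun i _ => hx i]
  rw [sum_mul_le_sum_mul_iff_exists_bounds (fun j => (hc j).le) (fun j => (hc' j).le) _
    fun j => Real.exp_pos _]
  refine exists_congr fun lam => exists_congr fun γ => ?_
  refine and_congr_right fun hγ => and_congr_right fun _ => and_congr_left fun _ => ?_
  exact forall_congr' fun j => (Real.log_le_iff_le_exp (hγ j)).symm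
end
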